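/- arXiv:2512.22676 — 7 statements merged into one kernel-verified Lean document; each statement's English description precedes it below -/
import Mathlib

section
/- If memory sizes N₀(n), N₁(n) and complexity B(n) grow linearly in n, and the speedup follows the Gustafson–Barsis law l(p,n) = (1−α)p + α with 0 ≤ α < 1, then the power P(p,n) = c₀N₀(n) + B(n)(c₀/f + c₁)(pN̂₂ + N₁(n))/l(p,n) satisfies: P(1,n) = Θ(n²) as n → ∞, while choosing p = p(n) proportional to n gives P(p(n),n) = O(n). -/
/-- With memory sizes and complexity growing linearly (`N₀(n)=a·n`, `N₁(n)=b·n`,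
`B(n)=c·n`) and Gustafson–Barsis speedup `l(p,n) = (1−α)p + α`, the power
`P(p,n) = c₀N₀(n) + B(n)(c₀/f + c₁)(pN̂₂ + N₁(n))/l(p,n)` satisfies
`P(1,n) = Θ(n²)`, while `p(n)` proportional to `n` gives `P(p(n),n) = O(n)`. -/
theorem stmt1
    (c₀ c₁ f N₂ a b c α : ℝ)
    (hc₀ : 0 < c₀) (hc₁ : 0 < c₁) (hf : 0 < f) (hN₂ : 0 < N₂)
    (ha : 0 < a) (hb : 0 < b) (hc : 0 < c) (hα0 : 0 ≤ α) (hα1 : α < 1)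
    (P : ℝ → ℕ → ℝ)
    (hP : ∀ (p : ℝ) (n : ℕ), P p n =
      c₀ * (a * n) + (c * n) * (c₀ / f + c₁) * (p * N₂ + b * n) / ((1 - α) * p + α)) :
    (∃ C₁ C₂ : ℝ, 0 < C₁ ∧ 0 < C₂ ∧ ∀ n : ℕ, 1 ≤ n →
        C₁ * (n : ℝ) ^ 2 ≤ P 1 n ∧ P 1 n ≤ C₂ * (n : ℝ) ^ 2) ∧
    (∀ κ : ℝ, 0 < κ → ∃ C : ℝ, ∀ n : ℕ, 1 ≤ n → P (κ * n) n ≤ C * n) := by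
  have hK : 0 < c * (c₀ / f + c₁) := by positivity
  constructor
  · refine ⟨c * (c₀ / f + c₁) * b, c₀ * a + c * (c₀ / f + c₁) * N₂ + c * (c₀ / f + c₁) * b,
      by positivity, by positivity, fun n hn => ?_⟩
    have hn1 : (1 : ℝ) ≤ n := by exact_mod_cast hn
    have hn0 : (0 : ℝ) < n := by linarith
    have hP1 : P 1 n = c₀ * (a * n) + (c * n) * (c₀ / f + c₁) * (N₂ + b * n) := by
      rw [hP]; ring_nf
    have h1 : 0 ≤ c₀ * (a * (n : ℝ)) := by positivity
    have h2 : 0 ≤ c * (n : ℝ) * (c₀ / f + c₁) * N₂ := by positivity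
    have heq : c * (c₀ / f + c₁) * b * (n : ℝ) ^ 2
        = c * (n : ℝ) * (c₀ / f + c₁) * (b * n) := by ring
    have hnn : (n : ℝ) ≤ (n : ℝ) ^ 2 := by nlinarith
    constructor
    · rw [hP1]; nlinarith
    · rw [hP1]
      have h3 : c₀ * (a * (n : ℝ)) ≤ c₀ * a * (n : ℝ) ^ 2 := by nlinarith [mul_pos hc₀ ha]
      have h4 : c * (n : ℝ) * (c₀ / f + c₁) * N₂ ≤ c * (c₀ / f + c₁) * N₂ * (n : ℝ) ^ 2 := by
        nlinarith [mul_pos hK hN₂]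
      nlinarith
  · intro κ hκ
    refine ⟨c₀ * a + c * (c₀ / f + c₁) * (κ * N₂ + b) / ((1 - α) * κ), fun n hn => ?_⟩
    have hn1 : (1 : ℝ) ≤ n := by exact_mod_cast hn
    have hn0 : (0 : ℝ) < n := by linarith
    have h1α : (0 : ℝ) < 1 - α := by linarith
    have hd2 : 0 < (1 - α) * κ := mul_pos h1α hκ
    have hd3 : 0 < (1 - α) * κ * n := mul_pos hd2 hn0
    have hden : 0 < (1 - α) * (κ * n) + α := by nlinarith
    have hnum : 0 ≤ c * (n : ℝ) * (c₀ / f + c₁) * (κ * n * N₂ + b * n) := by positivity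
    have hle : (1 - α) * κ * (n : ℝ) ≤ (1 - α) * (κ * n) + α := by nlinarith
    have hstep : c * (n : ℝ) * (c₀ / f + c₁) * (κ * n * N₂ + b * n) / ((1 - α) * (κ * n) + α)
        ≤ c * (n : ℝ) * (c₀ / f + c₁) * (κ * n * N₂ + b * n) / ((1 - α) * κ * n) := by
      gcongr
    have heq2 : c * (n : ℝ) * (c₀ / f + c₁) * (κ * n * N₂ + b * n) / ((1 - α) * κ * n)
        = (c * (c₀ / f + c₁) * (κ * N₂ + b) / ((1 - α) * κ)) * n := by
      field_simp
    rw [hP]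
    have hring : (c₀ * a + c * (c₀ / f + c₁) * (κ * N₂ + b) / ((1 - α) * κ)) * (n : ℝ)
        = c₀ * (a * n) + (c * (c₀ / f + c₁) * (κ * N₂ + b) / ((1 - α) * κ)) * n := by ring
    linarith [hstep, heq2]
end

section
/- For the symmetric node system (−1, −d, d, 1) with d ∈ (0,1) on [−1,1], the second-order Lebesgue number equals λ_{4,2}(d) = 6/(d − d²), and the minimum over d ∈ (0,1) is 24, attained at d = 1/2. -/
/-!
For four nodes every fundamental polynomial is a cubic, so its second derivative is affine:
`l_k''(t) = (6t - 2 ∑_{j ≠ k} x_j) / ∏_{j ≠ k} (x_k - x_j)`. For the nodes `(-1, -d, d, 1)` the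
four second derivatives pair up as `(3t ∓ 1) / (1 - d²)` and `(3t ∓ d) / (d (1 - d²))` up to sign,
and `|u - v| + |u + v| = 2 max (|u|, |v|)` shows that their absolute sum is maximal at `t = ±1`,
where it equals `6 / (1 - d²) + 6 / (d (1 - d²)) = 6 / (d - d²)`. Finally `d - d² ≤ 1/4`.
-/

open Finset

/-- Fundamental Lagrange polynomial of a node system. -/
noncomputable def fundPoly {n : ℕ} (x : Fin n → ℝ) (k : Fin n) (t : ℝ) : ℝ :=
  ∏ j ∈ Finset.univ.erase k, (t - x j) / (x k - x j)

/-- Second-order Lebesgue number of the node system (−1, −d, d, 1) on [−1,1]. -/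
noncomputable def lam (d : ℝ) : ℝ :=
  sSup ((fun t => ∑ k : Fin 4, |iteratedDeriv 2 (fundPoly ![(-1 : ℝ), -d, d, 1] k) t|) ''
    Set.Icc (-1 : ℝ) 1)

lemma iteratedDeriv_two_cubic (a b c : ℝ) :
    iteratedDeriv 2 (fun t : ℝ => (t - a) * (t - b) * (t - c)) =
      fun t => 6 * t - 2 * (a + b + c) := by
  have h1 : ∀ t : ℝ, HasDerivAt (fun t : ℝ => (t - a) * (t - b) * (t - c))
      (3 * t ^ 2 - 2 * (a + b + c) * t + (a * b + a * c + b * c)) t := fun t =>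
    ((((hasDerivAt_id' t).sub_const a).fun_mul ((hasDerivAt_id' t).sub_const b)).fun_mul
      ((hasDerivAt_id' t).sub_const c)).congr_deriv (by ring)
  have h2 : ∀ t : ℝ, HasDerivAt
      (fun t : ℝ => 3 * t ^ 2 - 2 * (a + b + c) * t + (a * b + a * c + b * c))
      (6 * t - 2 * (a + b + c)) t := fun t =>
    ((((hasDerivAt_pow 2 t).const_mul 3).fun_sub
      ((hasDerivAt_id' t).const_mul (2 * (a + b + c)))).add_const _).congr_deriv
        (by push_cast; ring)
  rw [iteratedDeriv_succ, iteratedDeriv_one, funext fun t => (h1 t).deriv]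
  exact funext fun t => (h2 t).deriv

lemma fundPoly_eq_div {n : ℕ} (x : Fin n → ℝ) (k : Fin n) :
    fundPoly x k = fun t =>
      (∏ j ∈ univ.erase k, (t - x j)) / ∏ j ∈ univ.erase k, (x k - x j) :=
  funext fun _ => prod_div_distrib ..

lemma iteratedDeriv_two_fundPoly (x : Fin 4 → ℝ) (k : Fin 4) :
    iteratedDeriv 2 (fundPoly x k) = fun t =>
      (6 * t - 2 * ∑ j ∈ univ.erase k, x j) / ∏ j ∈ univ.erase k, (x k - x j) := by
  obtain ⟨a, b, c, hab, hac, hbc, hs⟩ := card_eq_three.mp (by simp : (univ.erase k).card = 3)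
  have hprod : ∀ t, ∏ j ∈ univ.erase k, (t - x j) = (t - x a) * (t - x b) * (t - x c) := by
    intro t
    rw [hs, prod_insert (by simp [hab, hac]), prod_pair hbc, mul_assoc]
  have hsum : ∑ j ∈ univ.erase k, x j = x a + x b + x c := by
    rw [hs, sum_insert (by simp [hab, hac]), sum_pair hbc, add_assoc]
  funext t
  simp only [fundPoly_eq_div, hprod, hsum, iteratedDeriv_div_const, iteratedDeriv_two_cubic]

lemma iteratedDeriv_two_fundPoly_symm {d : ℝ} (hd : d ≠ 0) (hd' : 1 - d ^ 2 ≠ 0) (t : ℝ) :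
    (fun k => iteratedDeriv 2 (fundPoly ![(-1 : ℝ), -d, d, 1] k) t) =
      ![-(3 * t - 1) / (1 - d ^ 2), (3 * t - d) / (d * (1 - d ^ 2)),
        -(3 * t + d) / (d * (1 - d ^ 2)), (3 * t + 1) / (1 - d ^ 2)] := by
  funext k
  fin_cases k <;>
    simp only [Fin.zero_eta, Fin.mk_one, Fin.reduceFinMk, Fin.isValue, iteratedDeriv_two_fundPoly,
      ← filter_ne', sum_filter, prod_filter, Fin.sum_univ_four, Fin.prod_univ_four, ne_eq,
      Fin.reduceEq, not_true_eq_false, not_false_eq_true, ↓reduceIte, Matrix.cons_val] <;>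
    rw [div_eq_div_iff (by grind) (by grind)] <;> ring

lemma sum_abs_iteratedDeriv_two_fundPoly_symm {d : ℝ} (hd : d ∈ Set.Ioo 0 1) (t : ℝ) :
    ∑ k : Fin 4, |iteratedDeriv 2 (fundPoly ![(-1 : ℝ), -d, d, 1] k) t| =
      (|3 * t - 1| + |3 * t + 1|) / (1 - d ^ 2) +
        (|3 * t - d| + |3 * t + d|) / (d * (1 - d ^ 2)) := by
  obtain ⟨hd0, hd1⟩ := hd
  have hP : 0 < 1 - d ^ 2 := by nlinarith
  have h := iteratedDeriv_two_fundPoly_symm hd0.ne' hP.ne' t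
  rw [Fin.sum_univ_four, congrFun h 0, congrFun h 1, congrFun h 2, congrFun h 3]
  simp only [Matrix.cons_val, abs_div, abs_neg, abs_of_pos hP, abs_of_pos (mul_pos hd0 hP)]
  ring

lemma abs_sub_add_abs_add_le {u v a : ℝ} (hu : |u| ≤ a) (hv : |v| ≤ a) :
    |u - v| + |u + v| ≤ 2 * a := by
  rw [abs_le] at hu hv
  rcases abs_cases (u - v) with ⟨_, _⟩ | ⟨_, _⟩ <;>
    rcases abs_cases (u + v) with ⟨_, _⟩ | ⟨_, _⟩ <;> linarith

lemma lam_eq {d : ℝ} (hd : d ∈ Set.Ioo 0 1) : lam d = 6 / (d - d ^ 2) := by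
  have ⟨hd0, hd1⟩ := hd
  have hP : 0 < 1 - d ^ 2 := by nlinarith
  have hsplit : 6 / (d - d ^ 2) = 6 / (1 - d ^ 2) + 6 / (d * (1 - d ^ 2)) := by
    have : d - d ^ 2 ≠ 0 := by nlinarith
    field_simp
    ring
  refine IsGreatest.csSup_eq ⟨⟨1, by norm_num, ?_⟩, ?_⟩
  · beta_reduce
    rw [sum_abs_iteratedDeriv_two_fundPoly_symm hd, hsplit,
      abs_of_pos (by norm_num : (0 : ℝ) < 3 * 1 - 1),
      abs_of_pos (by norm_num : (0 : ℝ) < 3 * 1 + 1),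
      abs_of_pos (by linarith : 0 < 3 * 1 - d), abs_of_pos (by linarith : 0 < 3 * 1 + d)]
    ring
  · rintro _ ⟨t, ⟨ht1, ht2⟩, rfl⟩
    have h3t : |3 * t| ≤ 3 := abs_le.mpr ⟨by linarith, by linarith⟩
    have hnodes : |3 * t - 1| + |3 * t + 1| ≤ 6 := by
      linarith [abs_sub_add_abs_add_le h3t (by norm_num : |(1 : ℝ)| ≤ 3)]
    have hinner : |3 * t - d| + |3 * t + d| ≤ 6 := by
      linarith [abs_sub_add_abs_add_le h3t (abs_le.mpr ⟨by linarith, by linarith⟩ : |d| ≤ 3)]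
    beta_reduce
    rw [sum_abs_iteratedDeriv_two_fundPoly_symm hd, hsplit]
    gcongr

/-- For nodes (−1, −d, d, 1), d ∈ (0,1): `λ_{4,2}(d) = 6/(d − d²)`, with minimum 24
over (0,1), attained at d = 1/2. -/
theorem stmt3 :
    (∀ d ∈ Set.Ioo (0 : ℝ) 1, lam d = 6 / (d - d ^ 2)) ∧
    (∀ d ∈ Set.Ioo (0 : ℝ) 1, 24 ≤ lam d) ∧ lam (1 / 2) = 24 := by
  refine ⟨fun d hd => lam_eq hd, fun d hd => ?_, ?_⟩
  · rw [lam_eq hd, le_div_iff₀ (by nlinarith [hd.1, hd.2])]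
    nlinarith [sq_nonneg (2 * d - 1)]
  · rw [lam_eq (by norm_num)]
    norm_num
end

section
/- Splitting rule for the DFT: for n = km, F_n = L^n_k (I_k ⊗ F_m) W^n_m (F_k ⊗ I_m). -/
open Complex Matrix

/-- The N×N DFT matrix `F_N = (ω_N^{jl})` with `ω_N = exp(−2πi/N)`. -/
noncomputable def dftMat (N : ℕ) : Matrix (Fin N) (Fin N) ℂ :=
  Matrix.of fun j l =>
    Complex.exp (-2 * Real.pi * Complex.I / N) ^ ((j : ℕ) * (l : ℕ))

/-- Stride permutation matrix `L^n_k`. -/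
noncomputable def strideMat (n k : ℕ) : Matrix (Fin n) (Fin n) ℂ :=
  Matrix.of fun r c =>
    if (r : ℕ) = ((c : ℕ) % (n / k)) * k + (c : ℕ) / (n / k) then 1 else 0

/-- Twiddle diagonal matrix `W^n_d`. -/
noncomputable def twiddleMat (n d : ℕ) : Matrix (Fin n) (Fin n) ℂ :=
  Matrix.diagonal fun x =>
    Complex.exp (-2 * Real.pi * Complex.I / n) ^ (((x : ℕ) / d) * ((x : ℕ) % d))

/-- `I_{n/m} ⊗ F_m` as an n×n matrix. -/
noncomputable def idKronDFT (n m : ℕ) : Matrix (Fin n) (Fin n) ℂ :=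
  Matrix.of fun r c =>
    if (r : ℕ) / m = (c : ℕ) / m then
      Complex.exp (-2 * Real.pi * Complex.I / m) ^ (((r : ℕ) % m) * ((c : ℕ) % m))
    else 0

/-- `F_k ⊗ I_{n/k}` as an n×n matrix. -/
noncomputable def dftKronId (n k : ℕ) : Matrix (Fin n) (Fin n) ℂ :=
  Matrix.of fun r c =>
    if (r : ℕ) % (n / k) = (c : ℕ) % (n / k) then
      Complex.exp (-2 * Real.pi * Complex.I / k) ^ (((r : ℕ) / (n / k)) * ((c : ℕ) / (n / k)))
    else 0

/-!
Write `r = k r₁ + r₀` and `j = m j₁ + j₀` with `r₀ < k`, `j₀ < m`. Then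
`ω_n^{rj} = ω_m^{r₁ j₀} ω_n^{r₀ j₀} ω_k^{r₀ j₁}`, because `ω_n^k = ω_m`, `ω_n^m = ω_k` and
`ω_n^n = 1`. On the right-hand side, row `r` of the stride permutation selects the index
`m r₀ + r₁`, and the block structure of `I_k ⊗ F_m` and `F_k ⊗ I_m` leaves a single nonzero
term, `m r₀ + j₀`, in the remaining sum; its value is exactly that product of three powers.
-/

local notation "ω_[" N "]" => Complex.exp (-2 * Real.pi * Complex.I / ((N : ℕ) : ℂ))

lemma exp_neg_two_pi_I_div_pow_self (N : ℕ) : ω_[N] ^ N = 1 := by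
  rcases eq_or_ne N 0 with rfl | hN
  · exact pow_zero _
  rw [← Complex.exp_nat_mul, mul_div_cancel₀ _ (Nat.cast_ne_zero.mpr hN), neg_mul, neg_mul,
    Complex.exp_neg, Complex.exp_two_pi_mul_I, inv_one]

lemma exp_neg_two_pi_I_div_mul_pow {a : ℕ} (ha : a ≠ 0) (b : ℕ) : ω_[a * b] ^ a = ω_[b] := by
  rw [← Complex.exp_nat_mul]
  congr 1
  push_cast
  rcases eq_or_ne b 0 with rfl | hb
  · simp
  field_simp

lemma exp_neg_two_pi_I_div_mul_pow_mul {k m : ℕ} (hk : k ≠ 0) (hm : m ≠ 0) (r j : ℕ) :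
    ω_[k * m] ^ (r * j) =
      ω_[m] ^ (r / k * (j % m)) * ω_[k * m] ^ (r % k * (j % m)) * ω_[k] ^ (r % k * (j / m)) := by
  have hrj : r * j = k * m * (r / k * (j / m)) + k * (r / k * (j % m)) + r % k * (j % m)
      + m * (r % k * (j / m)) := by
    conv_lhs => rw [← Nat.div_add_mod r k, ← Nat.div_add_mod j m]
    ring
  rw [← exp_neg_two_pi_I_div_mul_pow hk m, ← exp_neg_two_pi_I_div_mul_pow hm k, mul_comm m k,
    ← pow_mul, ← pow_mul, hrj, pow_add, pow_add, pow_add, pow_mul, exp_neg_two_pi_I_div_pow_self,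
    one_pow, one_mul]

lemma mul_add_div_and_mod {m a b : ℕ} (hb : b < m) :
    (m * a + b) / m = a ∧ (m * a + b) % m = b :=
  (Nat.div_mod_unique (Nat.zero_lt_of_lt hb)).2 ⟨add_comm _ _, hb⟩

def strideIndex {k m : ℕ} (r : Fin (k * m)) : Fin (k * m) :=
  ⟨m * (r % k) + r / k, Nat.mul_add_lt_mul_of_lt_of_lt
    (Nat.mod_lt _ (Nat.pos_of_mul_pos_right r.pos)) (Nat.div_lt_of_lt_mul r.isLt)⟩

lemma strideIndex_div_and_mod {k m : ℕ} (r : Fin (k * m)) :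
    (strideIndex r : ℕ) / m = r % k ∧ (strideIndex r : ℕ) % m = r / k :=
  mul_add_div_and_mod (Nat.div_lt_of_lt_mul r.isLt)

lemma strideMat_mul_apply {k m : ℕ} (M : Matrix (Fin (k * m)) (Fin (k * m)) ℂ)
    (r j : Fin (k * m)) : (strideMat (k * m) k * M) r j = M (strideIndex r) j := by
  have hk : 0 < k := Nat.pos_of_mul_pos_right r.pos
  obtain ⟨hdiv, hmod⟩ := strideIndex_div_and_mod r
  rw [Matrix.mul_apply, Fintype.sum_eq_single (strideIndex r)]
  · simp only [strideMat, of_apply, Nat.mul_div_cancel_left m hk, hdiv, hmod,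
      Nat.div_add_mod' r k, if_true, one_mul]
  intro c hc
  simp only [strideMat, of_apply, Nat.mul_div_cancel_left m hk]
  rw [if_neg, zero_mul]
  intro hr
  have hcm : (c : ℕ) / m < k := Nat.div_lt_of_lt_mul (c.isLt.trans_eq (mul_comm k m))
  obtain ⟨hrk, hrm⟩ := (Nat.div_mod_unique (a := r) (d := c % m) hk).2 ⟨by rw [hr]; ring, hcm⟩
  refine hc (Fin.ext ?_)
  rw [← Nat.div_add_mod c m, ← hrk, ← hrm]
  rfl

lemma idKronDFT_mul_twiddleMat_mul_dftKronId_apply {k m : ℕ} (c j : Fin (k * m)) :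
    (idKronDFT (k * m) m * (twiddleMat (k * m) m * dftKronId (k * m) k)) c j =
      ω_[m] ^ (c % m * (j % m)) * ω_[k * m] ^ (c / m * (j % m)) * ω_[k] ^ (c / m * (j / m)) := by
  have hk : 0 < k := Nat.pos_of_mul_pos_right c.pos
  have hm : 0 < m := Nat.pos_of_mul_pos_left c.pos
  have hx₀ : m * (c / m) + j % m < k * m := Nat.mul_add_lt_mul_of_lt_of_lt
    (Nat.div_lt_of_lt_mul (c.isLt.trans_eq (mul_comm k m))) (Nat.mod_lt _ hm)
  obtain ⟨hdiv, hmod⟩ := mul_add_div_and_mod (a := c / m) (Nat.mod_lt j hm)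
  rw [Matrix.mul_apply, Fintype.sum_eq_single ⟨_, hx₀⟩]
  · simp only [idKronDFT, twiddleMat, dftKronId, of_apply, diagonal_mul,
      Nat.mul_div_cancel_left m hk, hdiv, hmod, if_true, mul_assoc]
  intro x hx
  simp only [idKronDFT, twiddleMat, dftKronId, of_apply, diagonal_mul,
    Nat.mul_div_cancel_left m hk]
  by_cases hxm : (x : ℕ) % m = j % m
  · rw [if_neg, zero_mul]
    intro hcx
    refine hx (Fin.ext ?_)
    rw [← Nat.div_add_mod x m, ← hcx, hxm]
  · rw [if_neg hxm, mul_zero, mul_zero]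

theorem stmt7_general (n k m : ℕ) (hn : n = k * m) :
    dftMat n = strideMat n k * idKronDFT n m * twiddleMat n m * dftKronId n k := by
  subst hn
  ext r j
  obtain ⟨hdiv, hmod⟩ := strideIndex_div_and_mod r
  rw [Matrix.mul_assoc, Matrix.mul_assoc, strideMat_mul_apply,
    idKronDFT_mul_twiddleMat_mul_dftKronId_apply, hdiv, hmod, dftMat, of_apply,
    exp_neg_two_pi_I_div_mul_pow_mul (Nat.pos_of_mul_pos_right r.pos).ne'
      (Nat.pos_of_mul_pos_left r.pos).ne']

/-- Splitting rule for the DFT: for n = km,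
`F_n = L^n_k (I_k ⊗ F_m) W^n_m (F_k ⊗ I_m)`. -/
theorem stmt7 (n k m : ℕ) (hk : 0 < k) (hm : 0 < m) (hn : n = k * m) :
    dftMat n = strideMat n k * idKronDFT n m * twiddleMat n m * dftKronId n k :=
  stmt7_general n k m hn
end

section
/- Let α be a multi-index with |α| = N and M > 0. Then the digit-reversal permutation matrices satisfy S_{(M,α)} = (I_M ⊗ S_α) L^{NM}_N and S_{(α,M)} = L^{NM}_M (I_M ⊗ S_α). -/
open Complex Matrix

/-- Digits of `x` in the mixed-radix system with radix list `L` (lowest radix first). -/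
def mixedDigits : List ℕ → ℕ → List ℕ
  | [], _ => []
  | b :: bs, x => (x % b) :: mixedDigits bs (x / b)

/-- Value of a digit list in the mixed-radix system with radix list `L` (lowest first). -/
def ofMixedDigits : List ℕ → List ℕ → ℕ
  | [], _ => 0
  | _, [] => 0
  | b :: bs, d :: ds => d + b * ofMixedDigits bs ds

/-- The digit-reversal permutation `P_α`: write `x` in the system generated by the
reversed multi-index, reverse the digits, and read the result in the system generated
by `α`.  Here `L` lists the radices of `α` starting from the lowest digit. -/
def revPerm (L : List ℕ) (x : ℕ) : ℕ :=
  ofMixedDigits L ((mixedDigits L.reverse x).reverse)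

/-- Digit-reversal permutation matrix `S_α` (of a given size `n`). -/
noncomputable def smat (L : List ℕ) (n : ℕ) : Matrix (Fin n) (Fin n) ℂ :=
  Matrix.of fun r c => if (r : ℕ) = revPerm L (c : ℕ) then 1 else 0

/-- `I_M ⊗ S_α` as an n×n matrix (blocks of size `N`). -/
noncomputable def idKronSmat (L : List ℕ) (n N : ℕ) : Matrix (Fin n) (Fin n) ℂ :=
  Matrix.of fun r c =>
    if (r : ℕ) / N = (c : ℕ) / N ∧ (r : ℕ) % N = revPerm L ((c : ℕ) % N) then 1 else 0

lemma mixedDigits_length (bs : List ℕ) (x : ℕ) : (mixedDigits bs x).length = bs.length := by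
  induction bs generalizing x with
  | nil => rfl
  | cons b bs ih => simp [mixedDigits, ih]

lemma ofMixedDigits_append (L : List ℕ) (M : ℕ) (ds : List ℕ) (d : ℕ)
    (h : ds.length = L.length) :
    ofMixedDigits (L ++ [M]) (ds ++ [d]) = ofMixedDigits L ds + L.prod * d := by
  induction L generalizing ds with
  | nil =>
    cases ds with
    | nil => simp [ofMixedDigits]
    | cons e ds => simp at h
  | cons b bs ih =>
    cases ds with
    | nil => simp at h
    | cons e ds =>
      simp only [List.cons_append, ofMixedDigits, List.prod_cons, List.append_eq]
      rw [ih ds (by simpa using h)]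
      ring

lemma mixedDigits_append (bs : List ℕ) (M x : ℕ) :
    mixedDigits (bs ++ [M]) x = mixedDigits bs x ++ [(x / bs.prod) % M] := by
  induction bs generalizing x with
  | nil => simp [mixedDigits]
  | cons b bs ih =>
    simp only [List.cons_append, mixedDigits, List.append_eq, ih, List.prod_cons,
      Nat.div_div_eq_div_mul]

lemma mixedDigits_mod (bs : List ℕ) (x : ℕ) :
    mixedDigits bs (x % bs.prod) = mixedDigits bs x := by
  induction bs generalizing x with
  | nil => rfl
  | cons b bs ih =>
    simp only [mixedDigits, List.prod_cons]
    rw [Nat.mod_mod_of_dvd x ⟨bs.prod, rfl⟩, Nat.mod_mul_right_div_self, ih]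

lemma mixedDigits_forall₂ (bs : List ℕ) (h : ∀ b ∈ bs, 0 < b) (x : ℕ) :
    List.Forall₂ (· < ·) (mixedDigits bs x) bs := by
  induction bs generalizing x with
  | nil => exact List.Forall₂.nil
  | cons b bs ih =>
    exact List.Forall₂.cons (Nat.mod_lt _ (h b (by simp)))
      (ih (fun b hb => h b (by simp [hb])) _)

lemma ofMixedDigits_lt {bs ds : List ℕ} (h : List.Forall₂ (· < ·) ds bs) :
    ofMixedDigits bs ds < bs.prod := by
  induction h with
  | nil => simp [ofMixedDigits]
  | @cons d b ds bs hd _ ih =>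
    simp only [ofMixedDigits, List.prod_cons]
    calc d + b * ofMixedDigits bs ds < b + b * ofMixedDigits bs ds := by omega
      _ = b * (1 + ofMixedDigits bs ds) := by ring
      _ ≤ b * bs.prod := Nat.mul_le_mul_left _ (by omega)

lemma revPerm_lt (L : List ℕ) (hL : ∀ b ∈ L, 0 < b) (x : ℕ) : revPerm L x < L.prod := by
  apply ofMixedDigits_lt
  have h1 : List.Forall₂ (· < ·) (mixedDigits L.reverse x) L.reverse :=
    mixedDigits_forall₂ _ (fun b hb => hL b (List.mem_reverse.mp hb)) x
  simpa using List.rel_reverse h1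

lemma revPerm_append (L : List ℕ) (M c : ℕ) :
    revPerm (L ++ [M]) c = revPerm L (c / M) + L.prod * (c % M) := by
  unfold revPerm
  rw [List.reverse_append]
  show ofMixedDigits (L ++ [M]) ((mixedDigits ([M] ++ L.reverse) c).reverse) = _
  rw [List.singleton_append]
  show ofMixedDigits (L ++ [M]) (((c % M) :: mixedDigits L.reverse (c / M)).reverse) = _
  rw [List.reverse_cons, ofMixedDigits_append _ _ _ _ (by simp [mixedDigits_length])]

lemma revPerm_cons (L : List ℕ) (M c : ℕ) (hc : c / L.prod < M) :
    revPerm (M :: L) c = c / L.prod + M * revPerm L (c % L.prod) := by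
  unfold revPerm
  rw [List.reverse_cons, mixedDigits_append, List.prod_reverse, List.reverse_append,
    Nat.mod_eq_of_lt hc]
  show (c / L.prod) + M * ofMixedDigits L ((mixedDigits L.reverse c).reverse) = _
  rw [← List.prod_reverse L, mixedDigits_mod]

lemma addlt {a b A B : ℕ} (ha : a < A) (hb : b < B) : a * B + b < A * B :=
  calc a * B + b < a * B + B := by omega
    _ = (a + 1) * B := by ring
    _ ≤ A * B := Nat.mul_le_mul_right _ ha

lemma div_mod_eq_iff {N r q v : ℕ} (hN : 0 < N) (hv : v < N) :
    (r / N = q ∧ r % N = v) ↔ r = q * N + v := by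
  constructor
  · rintro ⟨h1, h2⟩
    conv_lhs => rw [← Nat.div_add_mod r N]
    rw [h1, h2, Nat.mul_comm]
  · rintro rfl
    rw [Nat.mul_comm, Nat.mul_add_div hN, Nat.div_eq_of_lt hv, Nat.mul_add_mod,
      Nat.mod_eq_of_lt hv]
    simp

lemma perm_mul_apply {n : ℕ} (f g : ℕ → ℕ) (hg : ∀ c : Fin n, g c < n)
    (A B : Matrix (Fin n) (Fin n) ℂ)
    (hA : ∀ r c : Fin n, A r c = if (r : ℕ) = f c then 1 else 0)
    (hB : ∀ r c : Fin n, B r c = if (r : ℕ) = g c then 1 else 0)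
    (r c : Fin n) :
    (A * B) r c = if (r : ℕ) = f (g c) then 1 else 0 := by
  rw [Matrix.mul_apply, Finset.sum_eq_single (⟨g c, hg c⟩ : Fin n)]
  · rw [hA, hB]; simp
  · intro k _ hk
    rw [hB]
    have hne : (k : ℕ) ≠ g c := fun h => hk (Fin.ext h)
    simp [hne]
  · intro h; exact absurd (Finset.mem_univ _) h

/-- For a multi-index α (radix list `L`, lowest digit first) with |α| = N and M > 0:
`S_{(M,α)} = (I_M ⊗ S_α) L^{NM}_N` and `S_{(α,M)} = L^{NM}_M (I_M ⊗ S_α)`. -/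
theorem stmt8 (L : List ℕ) (hL : ∀ b ∈ L, 0 < b) (M : ℕ) (hM : 0 < M)
    (N n : ℕ) (hN : N = L.prod) (hn : n = N * M) :
    smat (L ++ [M]) n = idKronSmat L n N * strideMat n N ∧
    smat (M :: L) n = strideMat n M * idKronSmat L n N := by
  have hNpos : 0 < N := hN ▸ List.prod_pos hL
  have hrp : ∀ x, revPerm L x < N := fun x => hN ▸ revPerm_lt L hL x
  subst hn
  have hdN : N * M / N = M := Nat.mul_div_cancel_left M hNpos
  have hdM : N * M / M = N := Nat.mul_div_cancel N hM
  constructor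
  · ext r c
    have hc : (c : ℕ) < N * M := c.isLt
    have hcM : (c : ℕ) / M < N := (Nat.div_lt_iff_lt_mul hM).mpr hc
    have hg : ∀ c : Fin (N * M), ((c : ℕ) % M) * N + (c : ℕ) / M < N * M := by
      intro c
      have h := addlt (Nat.mod_lt (c : ℕ) hM) ((Nat.div_lt_iff_lt_mul hM).mpr c.isLt)
      exact h.trans_eq (Nat.mul_comm M N)
    rw [perm_mul_apply (fun x => (x / N) * N + revPerm L (x % N))
        (fun x => (x % M) * N + x / M) hg _ _
        (fun r c => by
          simp only [idKronSmat, Matrix.of_apply]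
          rw [if_congr (div_mod_eq_iff hNpos (hrp _)) rfl rfl])
        (fun r c => by simp only [strideMat, Matrix.of_apply, hdN]) r c]
    simp only [smat, Matrix.of_apply]
    have e1 : (((c : ℕ) % M) * N + (c : ℕ) / M) / N = (c : ℕ) % M := by
      rw [Nat.mul_comm, Nat.mul_add_div hNpos, Nat.div_eq_of_lt hcM, Nat.add_zero]
    have e2 : (((c : ℕ) % M) * N + (c : ℕ) / M) % N = (c : ℕ) / M := by
      rw [Nat.add_comm, Nat.add_mul_mod_self_right, Nat.mod_eq_of_lt hcM]
    rw [e1, e2, revPerm_append, ← hN]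
    have key : revPerm L ((c : ℕ) / M) + N * ((c : ℕ) % M)
        = (c : ℕ) % M * N + revPerm L ((c : ℕ) / M) := by ring
    rw [key]
  · ext r c
    have hc : (c : ℕ) < N * M := c.isLt
    have hcN : (c : ℕ) / N < M := by
      rw [Nat.div_lt_iff_lt_mul hNpos]; exact hc.trans_eq (Nat.mul_comm N M)
    have hg : ∀ c : Fin (N * M), ((c : ℕ) / N) * N + revPerm L ((c : ℕ) % N) < N * M := by
      intro c
      have hcN' : (c : ℕ) / N < M := by
        rw [Nat.div_lt_iff_lt_mul hNpos]; exact c.isLt.trans_eq (Nat.mul_comm N M)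
      have h := addlt hcN' (hrp ((c : ℕ) % N))
      exact h.trans_eq (Nat.mul_comm M N)
    rw [perm_mul_apply (fun x => (x % N) * M + x / N)
        (fun x => (x / N) * N + revPerm L (x % N)) hg _ _
        (fun r c => by simp only [strideMat, Matrix.of_apply, hdM])
        (fun r c => by
          simp only [idKronSmat, Matrix.of_apply]
          rw [if_congr (div_mod_eq_iff hNpos (hrp _)) rfl rfl]) r c]
    simp only [smat, Matrix.of_apply]
    have e1 : (((c : ℕ) / N) * N + revPerm L ((c : ℕ) % N)) % N = revPerm L ((c : ℕ) % N) := by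
      rw [Nat.add_comm, Nat.add_mul_mod_self_right, Nat.mod_eq_of_lt (hrp _)]
    have e2 : (((c : ℕ) / N) * N + revPerm L ((c : ℕ) % N)) / N = (c : ℕ) / N := by
      rw [Nat.mul_comm, Nat.mul_add_div hNpos, Nat.div_eq_of_lt (hrp _), Nat.add_zero]
    rw [e1, e2, revPerm_cons L M (c : ℕ) (by rw [← hN]; exact hcN), ← hN]
    have key : (c : ℕ) / N + M * revPerm L ((c : ℕ) % N)
        = revPerm L ((c : ℕ) % N) * M + (c : ℕ) / N := by ring
    rw [key]
end

section
/- Mixed-radix FFT factorization: for α = (n_K,…,n₀), N = Π_{k=0}^{K} n_k, N_k = Π_{j=0}^{k} n_j, one has F_N = (Π_{k=0}^{K} D_{k,α}) S_α (product ordered with smaller indices on the right), where D_{k,α} = A_k^{-1}(I_{N/n_k} ⊗ F_{n_k}) Ŵ_k A_k, A_k = I_{N/N_k} ⊗ L^{N_k}_{n_k}, Ŵ_k = I_{N/N_k} ⊗ W^{N_k}_{n_k}. -/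
/-!
Conjugating by the stride permutation turns `D_k` into the Cooley–Tukey stage
`I ⊗ (F_{n_k} ⊗ I_{N_{k-1}}) T`, whose nonzero entries are
`ω_{N_k}^{(r mod N_k) ⌊(c mod N_k) / N_{k-1}⌋}`.
By induction on `m`, the product `D_{m-1} ⋯ D_0` is block diagonal with blocks of size `N_{m-1}`,
each block being `F_{N_{m-1}}` with its columns permuted by the mixed-radix digit reversal in the
radices `n_0, …, n_{m-1}`: every new stage contributes one more digit. For `m = K + 1` the column
permutation is undone by `S_α`, which leaves `F_N`.
-/

open Complex Matrix

/-- `I_{n/s} ⊗ L^s_k` as an n×n matrix (blocks of size `s`, stride `k` inside a block). -/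
noncomputable def idKronStride (n s k : ℕ) : Matrix (Fin n) (Fin n) ℂ :=
  Matrix.of fun r c =>
    if (r : ℕ) / s = (c : ℕ) / s ∧
        (r : ℕ) % s = (((c : ℕ) % s) % (s / k)) * k + ((c : ℕ) % s) / (s / k) then 1 else 0

/-- `I_{n/s} ⊗ W^s_d` as an n×n matrix. -/
noncomputable def idKronTwiddle (n s d : ℕ) : Matrix (Fin n) (Fin n) ℂ :=
  Matrix.diagonal fun x =>
    Complex.exp (-2 * Real.pi * Complex.I / s) ^ ((((x : ℕ) % s) / d) * (((x : ℕ) % s) % d))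

namespace MixedRadixFFT

noncomputable def root (S : ℕ) : ℂ := Complex.exp (-2 * Real.pi * Complex.I / S)

lemma root_pow_self {S : ℕ} (hS : S ≠ 0) : root S ^ S = 1 := by
  have : (S : ℂ) * (-2 * Real.pi * Complex.I / S) = -(2 * Real.pi * Complex.I) := by
    field_simp
  rw [root, ← Complex.exp_nat_mul, this, Complex.exp_neg, Complex.exp_two_pi_mul_I, inv_one]

lemma root_pow_congr {S a b : ℕ} (hS : S ≠ 0) (h : a ≡ b [MOD S]) :
    root S ^ a = root S ^ b := by
  rw [pow_eq_pow_mod a (root_pow_self hS), h, ← pow_eq_pow_mod b (root_pow_self hS)]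

lemma root_eq_root_mul_pow (s : ℕ) {n : ℕ} (hn : n ≠ 0) : root s = root (s * n) ^ n := by
  rw [root, root, ← Complex.exp_nat_mul]
  congr 1
  push_cast
  field_simp

section IndexMatrix

variable {R : Type*}

def indexMatrix [Zero R] [One R] (N : ℕ) (f : ℕ → ℕ) : Matrix (Fin N) (Fin N) R :=
  of fun r c => if (r : ℕ) = f c then 1 else 0

lemma mul_indexMatrix_apply [NonAssocSemiring R] {N : ℕ} {f : ℕ → ℕ}
    (M : Matrix (Fin N) (Fin N) R) (r c : Fin N) (hc : f c < N) :
    (M * (indexMatrix N f : Matrix (Fin N) (Fin N) R)) r c = M r ⟨f c, hc⟩ := by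
  rw [mul_apply, Fintype.sum_eq_single ⟨f c, hc⟩]
  · simp [indexMatrix]
  · intro x hx
    simp [indexMatrix, Fin.ext_iff.not.mp hx]

lemma indexMatrix_transpose_mul_apply [NonAssocSemiring R] {N : ℕ} {f : ℕ → ℕ}
    (M : Matrix (Fin N) (Fin N) R) (r c : Fin N) (hr : f r < N) :
    ((indexMatrix N f : Matrix (Fin N) (Fin N) R)ᵀ * M) r c = M ⟨f r, hr⟩ c := by
  rw [mul_apply, Fintype.sum_eq_single ⟨f r, hr⟩]
  · simp [indexMatrix]
  · intro x hx
    simp [indexMatrix, Fin.ext_iff.not.mp hx]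

lemma inv_indexMatrix [CommRing R] {N : ℕ} {f : ℕ → ℕ} (hf : ∀ x < N, f x < N)
    (hinj : Set.InjOn f (Set.Iio N)) :
    (indexMatrix N f : Matrix (Fin N) (Fin N) R)⁻¹ = (indexMatrix N f)ᵀ := by
  refine inv_eq_left_inv (ext fun r c => ?_)
  rw [indexMatrix_transpose_mul_apply _ _ _ (hf r r.isLt)]
  simp only [indexMatrix, of_apply, one_apply, Fin.ext_iff,
    hinj.eq_iff (Set.mem_Iio.mpr r.isLt) (Set.mem_Iio.mpr c.isLt)]

end IndexMatrix

lemma lt_of_div_eq_div {N S x c : ℕ} (hS : S ∣ N) (hc : c < N) (h : x / S = c / S) : x < N :=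
  Nat.lt_of_div_lt_div (h ▸ Nat.div_lt_div_of_lt_of_dvd hS hc)

section Stride

/-- The index map of `I_{N/(s n)} ⊗ L^{s n}_n`: within each block of size `s * n`,
position `s * j + i` (with `i < s`) is sent to `n * i + j`. -/
def stride (s n c : ℕ) : ℕ :=
  c / (s * n) * (s * n) + (c % (s * n) % s * n + c % (s * n) / s)

variable {s n : ℕ}

lemma mod_mul_div_lt (hn : 0 < n) (c : ℕ) : c % (s * n) / s < n := by
  rw [Nat.mod_mul_right_div_self]
  exact Nat.mod_lt _ hn

lemma stride_eq (c : ℕ) :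
    stride s n c = n * (s * (c / (s * n)) + c % s) + c % (s * n) / s := by
  rw [stride, Nat.mod_mul_right_mod]
  ring

lemma stride_div (hn : 0 < n) (c : ℕ) : stride s n c / n = s * (c / (s * n)) + c % s := by
  rw [stride_eq, Nat.mul_add_div hn, Nat.div_eq_of_lt (mod_mul_div_lt hn c), add_zero]

lemma stride_mod (hn : 0 < n) (c : ℕ) : stride s n c % n = c % (s * n) / s := by
  rw [stride_eq, Nat.mul_add_mod, Nat.mod_eq_of_lt (mod_mul_div_lt hn c)]

lemma stride_div_mul (hs : 0 < s) (hn : 0 < n) (c : ℕ) :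
    stride s n c / (s * n) = c / (s * n) := by
  rw [mul_comm s n, ← Nat.div_div_eq_div_mul, stride_div hn, Nat.mul_add_div hs,
    Nat.div_eq_of_lt (Nat.mod_lt _ hs), add_zero, mul_comm]

lemma stride_lt {N : ℕ} (hs : 0 < s) (hn : 0 < n) (hN : s * n ∣ N) {c : ℕ} (hc : c < N) :
    stride s n c < N :=
  lt_of_div_eq_div hN hc (stride_div_mul hs hn c)

lemma stride_injective (hs : 0 < s) (hn : 0 < n) : Function.Injective (stride s n) := by
  have decode : ∀ c,
      s * n * (stride s n c / n / s) + (s * (stride s n c % n) + stride s n c / n % s) = c := by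
    intro c
    rw [stride_div hn, stride_mod hn, Nat.mul_add_div hs, Nat.mul_add_mod,
      Nat.div_eq_of_lt (Nat.mod_lt _ hs), add_zero, Nat.mod_mod, ← Nat.mod_mul_right_mod c s n,
      Nat.div_add_mod, Nat.div_add_mod]
  intro a b h
  rw [← decode a, ← decode b, h]

end Stride

lemma idKronStride_eq_indexMatrix {N s n : ℕ} (hs : 0 < s) (hn : 0 < n) :
    idKronStride N (s * n) n = indexMatrix N (stride s n) := by
  ext r c
  simp only [idKronStride, indexMatrix, of_apply, Nat.mul_div_cancel _ hn]
  congr 1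
  refine propext ⟨fun ⟨hdiv, hmod⟩ => ?_, fun h => ?_⟩
  · rw [← Nat.div_add_mod' (r : ℕ) (s * n), hdiv, hmod, stride]
  · have hlt : (c : ℕ) % (s * n) % s * n + (c : ℕ) % (s * n) / s < s * n := by
      nlinarith [Nat.mod_lt ((c : ℕ) % (s * n)) hs, mod_mul_div_lt hn (s := s) c]
    rw [h, stride_div_mul hs hn, stride, Nat.mul_add_mod_of_lt hlt]
    exact ⟨rfl, rfl⟩

lemma mul_add_eq_mul_add_iff {s a b x y : ℕ} (hx : x < s) (hy : y < s) :
    s * a + x = s * b + y ↔ a = b ∧ x = y := by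
  refine ⟨fun h => ?_, fun ⟨ha, hx⟩ => ha ▸ hx ▸ rfl⟩
  have hs : 0 < s := by omega
  have hdiv := congrArg (· / s) h
  have hmod := congrArg (· % s) h
  simp only [Nat.mul_add_div hs, Nat.div_eq_of_lt hx, Nat.div_eq_of_lt hy, Nat.mul_add_mod,
    Nat.mod_eq_of_lt hx, Nat.mod_eq_of_lt hy, add_zero] at hdiv hmod
  exact ⟨hdiv, hmod⟩

/-- The radix-`n` Cooley–Tukey stage `I_{N/(s n)} ⊗ (F_n ⊗ I_s) T^{s n}_s`. -/
noncomputable def butterfly (N s n : ℕ) : Matrix (Fin N) (Fin N) ℂ :=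
  of fun r c =>
    if (r : ℕ) / (s * n) = (c : ℕ) / (s * n) ∧ (r : ℕ) % s = (c : ℕ) % s then
      root (s * n) ^ ((r : ℕ) % (s * n) * ((c : ℕ) % (s * n) / s))
    else 0

theorem stride_conj_eq_butterfly {N s n : ℕ} (hs : 0 < s) (hn : 0 < n) (hN : s * n ∣ N) :
    (idKronStride N (s * n) n)⁻¹ * idKronDFT N n * idKronTwiddle N (s * n) n *
      idKronStride N (s * n) n = butterfly N s n := by
  have hlt : ∀ x < N, stride s n x < N := fun x => stride_lt hs hn hN
  rw [idKronStride_eq_indexMatrix hs hn, inv_indexMatrix hlt (stride_injective hs hn).injOn]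
  ext r c
  rw [mul_indexMatrix_apply _ _ _ (hlt c c.isLt), idKronTwiddle, mul_diagonal,
    indexMatrix_transpose_mul_apply _ _ _ (hlt r r.isLt)]
  have twiddle_row : stride s n c % (s * n) / n = c % s := by
    rw [mul_comm s n, Nat.mod_mul_right_div_self, stride_div hn, Nat.mul_add_mod, Nat.mod_mod]
  have twiddle_col : stride s n c % (s * n) % n = c % (s * n) / s := by
    rw [Nat.mod_mul_left_mod, stride_mod hn]
  simp only [idKronDFT, butterfly, of_apply, stride_div hn, stride_mod hn, twiddle_row,
    twiddle_col, mul_add_eq_mul_add_iff (Nat.mod_lt r hs) (Nat.mod_lt c hs)]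
  split_ifs with h
  · change root n ^ _ * root (s * n) ^ _ = _
    rw [root_eq_root_mul_pow n hs.ne', mul_comm n s, ← pow_mul, ← pow_add, ← h.2,
      ← Nat.mod_mul_right_mod r s n]
    conv_rhs => rw [← Nat.div_add_mod (r % (s * n)) s]
    ring
  · exact zero_mul _

/-- `I_{N/S} ⊗ F_S` with the columns of each diagonal block reindexed by `g`. -/
noncomputable def blockDFTReindex (N S : ℕ) (g : ℕ → ℕ) : Matrix (Fin N) (Fin N) ℂ :=
  of fun r c =>
    if (r : ℕ) / S = (c : ℕ) / S then root S ^ ((r : ℕ) % S * g ((c : ℕ) % S)) else 0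

lemma blockDFTReindex_one (N : ℕ) (g : ℕ → ℕ) : blockDFTReindex N 1 g = 1 := by
  ext r c
  simp [blockDFTReindex, one_apply, Fin.ext_iff, Nat.mod_one]

theorem butterfly_mul_blockDFTReindex {N s n : ℕ} (hs : 0 < s) (hn : 0 < n) (hN : s ∣ N)
    (g : ℕ → ℕ) :
    butterfly N s n * blockDFTReindex N s g =
      blockDFTReindex N (s * n) (fun y => y / s + n * g (y % s)) := by
  ext r c
  have hdiv : (s * (c / s) + r % s) / s = c / s := by
    rw [Nat.mul_add_div hs, Nat.div_eq_of_lt (Nat.mod_lt _ hs), add_zero]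
  have hmod : (s * (c / s) + r % s) % s = r % s := by
    rw [Nat.mul_add_mod, Nat.mod_mod]
  -- the only `x` with `x % s = r % s` and `x / s = c / s`
  rw [mul_apply,
    Fintype.sum_eq_single ⟨s * (c / s) + r % s, lt_of_div_eq_div hN c.isLt hdiv⟩]
  · simp only [butterfly, blockDFTReindex, of_apply, hdiv, hmod,
      ← Nat.div_div_eq_div_mul, Nat.mod_mul_right_div_self, Nat.mod_mul_right_mod, and_true,
      if_true]
    split_ifs
    · rw [root_eq_root_mul_pow s hn.ne', ← pow_mul, ← pow_add]
      refine root_pow_congr (Nat.mul_pos hs hn).ne' ?_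
      rw [mul_add]
      refine Nat.ModEq.add_left _ ?_
      -- `r % (s * n) - r % s` is a multiple of `s`, so `n` times it vanishes modulo `s * n`
      have split_row : (r : ℕ) % (s * n) * (n * g (c % s)) =
          n * ((r : ℕ) % s * g (c % s)) + s * n * ((r : ℕ) % (s * n) / s * g (c % s)) := by
        conv_lhs => rw [← Nat.div_add_mod ((r : ℕ) % (s * n)) s, Nat.mod_mul_right_mod]
        ring
      rw [split_row]
      exact (Nat.add_mul_mod_self_left _ _ _).symm
    · exact zero_mul _
  · intro x hx
    simp only [butterfly, blockDFTReindex, of_apply]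
    split_ifs with hrx hxc
    · exact absurd (Fin.ext (by rw [← Nat.div_add_mod (x : ℕ) s, hxc, ← hrx.2])) hx
    all_goals simp only [mul_zero, zero_mul]

/-- Reads the digits of `y` in the radices `α 0, …, α (m-1)` (lowest first) and reassembles
them in the reverse order, in the radices `α (m-1), …, α 0`. -/
def digitRev (α : ℕ → ℕ) : ℕ → ℕ → ℕ
  | 0, _ => 0
  | m + 1, y =>
      y / ∏ j ∈ Finset.range m, α j + α m * digitRev α m (y % ∏ j ∈ Finset.range m, α j)

lemma prod_range_pos {α : ℕ → ℕ} {m : ℕ} (hα : ∀ k < m, 0 < α k) :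
    0 < ∏ j ∈ Finset.range m, α j :=
  Finset.prod_pos fun j hj => hα j (Finset.mem_range.mp hj)

theorem prod_butterfly_eq_blockDFTReindex {N : ℕ} {α : ℕ → ℕ} {m : ℕ}
    (hα : ∀ k < m, 0 < α k)
    (hN : ∏ j ∈ Finset.range m, α j ∣ N) :
    ((List.range m).reverse.map fun k => butterfly N (∏ j ∈ Finset.range k, α j) (α k)).prod =
      blockDFTReindex N (∏ j ∈ Finset.range m, α j) (digitRev α m) := by
  induction m with
  | zero => exact (blockDFTReindex_one N _).symm
  | succ m ih =>
    rw [Finset.prod_range_succ] at hN ⊢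
    rw [List.range_succ, List.reverse_append, List.reverse_singleton, List.singleton_append,
      List.map_cons, List.prod_cons, ih (fun k hk => hα k (by omega)) (dvd_of_mul_right_dvd hN),
      butterfly_mul_blockDFTReindex (prod_range_pos fun k hk => hα k (by omega)) (hα m (by omega))
        (dvd_of_mul_right_dvd hN)]
    rfl

lemma length_mixedDigits : ∀ (L : List ℕ) (x : ℕ), (mixedDigits L x).length = L.length
  | [], _ => rfl
  | _ :: bs, x => by simp [mixedDigits, length_mixedDigits bs]

lemma ofMixedDigits_append_singleton :
    ∀ (L ds : List ℕ) (b d : ℕ), ds.length = L.length →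
      ofMixedDigits (L ++ [b]) (ds ++ [d]) = ofMixedDigits L ds + L.prod * d
  | [], [], _, _, _ => by simp [ofMixedDigits]
  | b' :: bs, d' :: ds, b, d, h => by
      simp only [List.cons_append, ofMixedDigits, List.prod_cons,
        ofMixedDigits_append_singleton bs ds b d (by simpa using h)]
      ring
  | [], _ :: _, _, _, h | _ :: _, [], _, _, h => by simp at h

lemma revPerm_append_singleton (L : List ℕ) (b x : ℕ) :
    revPerm (L ++ [b]) x = revPerm L (x / b) + L.prod * (x % b) := by
  rw [revPerm, List.reverse_append, List.reverse_singleton, List.singleton_append, mixedDigits,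
    List.reverse_cons]
  exact ofMixedDigits_append_singleton L _ b _ (by simp [length_mixedDigits])

lemma revPerm_lt {L : List ℕ} (hL : ∀ b ∈ L, 0 < b) (x : ℕ) : revPerm L x < L.prod := by
  induction L using List.reverseRecOn generalizing x with
  | nil => simp [revPerm, ofMixedDigits]
  | append_singleton L b ih =>
    have hb : 0 < b := hL b (by simp)
    have ih' := ih (fun b' hb' => hL b' (by simp [hb'])) (x / b)
    rw [revPerm_append_singleton, List.prod_append, List.prod_singleton]
    nlinarith [Nat.mod_lt x hb]

theorem digitRev_revPerm {α : ℕ → ℕ} {m : ℕ} (hα : ∀ k < m, 0 < α k) {x : ℕ}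
    (hx : x < ∏ j ∈ Finset.range m, α j) :
    digitRev α m (revPerm ((List.range m).map α) x) = x := by
  induction m generalizing x with
  | zero =>
    rw [Finset.prod_range_zero, Nat.lt_one_iff] at hx
    rw [hx, digitRev]
  | succ m ih =>
    have hs : 0 < ∏ j ∈ Finset.range m, α j := prod_range_pos fun k hk => hα k (by omega)
    have hrev : revPerm ((List.range m).map α) (x / α m) < ∏ j ∈ Finset.range m, α j :=
      revPerm_lt (by simpa using fun k hk => hα k (by omega)) _
    rw [List.range_succ, List.map_append, List.map_singleton, revPerm_append_singleton, digitRev]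
    rw [show ((List.range m).map α).prod = ∏ j ∈ Finset.range m, α j from rfl,
      Nat.add_mul_div_left _ _ hs, Nat.div_eq_of_lt hrev, zero_add, Nat.add_mul_mod_self_left,
      Nat.mod_eq_of_lt hrev, ih (fun k hk => hα k (by omega)), Nat.mod_add_div]
    rw [Finset.prod_range_succ] at hx
    exact Nat.div_lt_of_lt_mul (mul_comm (α m) _ ▸ hx)

lemma blockDFTReindex_mul_smat {N : ℕ} {L : List ℕ} {g : ℕ → ℕ}
    (hlt : ∀ c < N, revPerm L c < N) (hg : ∀ c < N, g (revPerm L c) = c) :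
    blockDFTReindex N N g * smat L N = dftMat N := by
  ext r c
  rw [show smat L N = indexMatrix N (revPerm L) from rfl,
    mul_indexMatrix_apply _ _ _ (hlt c c.isLt)]
  simp only [blockDFTReindex, dftMat, of_apply, Nat.div_eq_of_lt r.isLt,
    Nat.div_eq_of_lt (hlt c c.isLt), Nat.mod_eq_of_lt r.isLt, Nat.mod_eq_of_lt (hlt c c.isLt),
    hg c c.isLt, if_true]
  rfl

end MixedRadixFFT

open MixedRadixFFT in
/-- Mixed-radix FFT factorization: `F_N = (D_K ⋯ D_1 D_0) S_α` with
`D_k = A_k⁻¹ (I_{N/n_k} ⊗ F_{n_k}) Ŵ_k A_k`, `A_k = I_{N/N_k} ⊗ L^{N_k}_{n_k}`,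
`Ŵ_k = I_{N/N_k} ⊗ W^{N_k}_{n_k}`. -/
theorem stmt9 (K : ℕ) (α : ℕ → ℕ) (hα : ∀ k ≤ K, 0 < α k)
    (N : ℕ) (hN : N = ∏ k ∈ Finset.range (K + 1), α k)
    (Nk : ℕ → ℕ) (hNk : ∀ k, Nk k = ∏ j ∈ Finset.range (k + 1), α j)
    (A W D : ℕ → Matrix (Fin N) (Fin N) ℂ)
    (hA : ∀ k, A k = idKronStride N (Nk k) (α k))
    (hW : ∀ k, W k = idKronTwiddle N (Nk k) (α k))
    (hD : ∀ k, D k = (A k)⁻¹ * idKronDFT N (α k) * W k * A k) :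
    dftMat N = ((List.range (K + 1)).reverse.map D).prod *
      smat ((List.range (K + 1)).map α) N := by
  have hpos : ∀ k < K + 1, 0 < α k := fun k hk => hα k (Nat.le_of_lt_succ hk)
  have hD_eq : ∀ k ∈ (List.range (K + 1)).reverse,
      D k = butterfly N (∏ j ∈ Finset.range k, α j) (α k) := by
    intro k hk
    have hk : k < K + 1 := List.mem_range.mp (List.mem_reverse.mp hk)
    have hdvd : (∏ j ∈ Finset.range k, α j) * α k ∣ N := by
      rw [← Finset.prod_range_succ, hN]
      exact Finset.prod_dvd_prod_of_subset _ _ α (Finset.range_subset_range.mpr hk)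
    rw [hD, hA, hW, hNk, Finset.prod_range_succ]
    exact stride_conj_eq_butterfly (prod_range_pos fun j hj => hpos j (by omega)) (hpos k hk) hdvd
  rw [List.map_congr_left hD_eq, prod_butterfly_eq_blockDFTReindex hpos (hN ▸ dvd_rfl), ← hN]
  refine (blockDFTReindex_mul_smat (fun c _ => ?_) fun c hc => ?_).symm
  · exact hN ▸ revPerm_lt (by simpa using hpos) c
  · exact digitRev_revPerm hpos (hN ▸ hc)
end

section
/- Let R = lcm(n₀,…,n_K), q_k = R/n_k, M_k = lcm(n₀,…,n_k), d_k = M_k/M_{k−1} (with M_{−1} = 1). Fix k, and define sets P_i = {0,…,v_{i,k}−1} for i < k, P_k = {0,…,n_k−1}, P_i = {0,…,d_i−1} for i > k, where v_{i,k} = s_{i,k}/s_{i−1,k}, s_{i,k} = M_i/gcd(M_i, n_k), s_{−1,k} = 1. Then the map h(p) = Σ_{i=0}^{K} p_i q_i mod R is a bijection from Π P_i onto {0,…,R−1}. -/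
/-!
Reorder the moduli as `n_k, n_0, …, n_{k-1}, n_{k+1}, …, n_K` and let `L_j` be the lcm of the
first `j` of them. Then `L_{i+2} = lcm(n_k, M_i) = s_{i,k} n_k` for `i < k` and `L_{j+1} = M_j`
for `j ≥ k`, so the ratios `L_{j+1}/L_j` are the sizes of the `P_i` taken in the new order, and
the weight `q_i` of the `j`-th modulus `m_j = n_i` of the new order is `L_{K+1}/m_j`. It therefore
suffices to prove, for any positive moduli `m_j` with prefix lcms `L_j`, that digits
`p_j < L_{j+1}/L_j` are determined by `Σ p_j L_n/m_j mod L_n`; since `∏ L_{j+1}/L_j = L_n`,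
counting then gives bijectivity. Injectivity goes by induction on `n`: modulo `t = L_{n+1}/L_n`
only the last digit survives, with weight `L_{n+1}/m_n = L_n/gcd(L_n, m_n)` coprime to `t`, so that
digit is determined, and cancelling `t` from the rest leaves the case `n`.
-/

open Finset

theorem Nat.coprime_lcm_div_lcm_div {a b : ℕ} (ha : 0 < a) (hb : 0 < b) :
    Nat.Coprime (Nat.lcm a b / a) (Nat.lcm a b / b) := by
  have hga : Nat.lcm a b / a = b / Nat.gcd a b := by
    rw [Nat.lcm, Nat.mul_div_assoc _ (Nat.gcd_dvd_right a b), Nat.mul_div_cancel_left _ ha]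
  have hgb : Nat.lcm a b / b = a / Nat.gcd a b := by
    rw [Nat.lcm, mul_comm, Nat.mul_div_assoc _ (Nat.gcd_dvd_left a b), Nat.mul_div_cancel_left _ hb]
  rw [hga, hgb]
  exact (Nat.coprime_div_gcd_div_gcd (Nat.gcd_pos_of_pos_left b ha)).symm

namespace MixedRadix

def prefixLcm (m : ℕ → ℕ) (n : ℕ) : ℕ := (range n).lcm m

def radix (m : ℕ → ℕ) (j : ℕ) : ℕ := prefixLcm m (j + 1) / prefixLcm m j

def box (b : ℕ → ℕ) (n : ℕ) : Set (ℕ → ℕ) := {p | (∀ i < n, p i < b i) ∧ ∀ i, n ≤ i → p i = 0}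

def boxEquivPi (b : ℕ → ℕ) (n : ℕ) : box b n ≃ ((i : Fin n) → Fin (b i)) where
  toFun p i := ⟨p.1 i, p.2.1 i i.2⟩
  invFun f := ⟨fun i => if h : i < n then f ⟨i, h⟩ else 0,
    fun i hi => by simp [hi], fun i hi => by simp [not_lt.2 hi]⟩
  left_inv p := by
    ext i
    by_cases hi : i < n
    · simp [hi]
    · simp [hi, p.2.2 i (not_lt.1 hi)]
  right_inv f := by ext i; simp

lemma ncard_box (b : ℕ → ℕ) (n : ℕ) : (box b n).ncard = ∏ i ∈ range n, b i := by
  rw [← Nat.card_coe_set_eq, Nat.card_congr (boxEquivPi b n), Nat.card_pi,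
    ← Fin.prod_univ_eq_prod_range]
  simp

lemma box_succ (b : ℕ → ℕ) (K : ℕ) :
    {p : ℕ → ℕ | (∀ i ≤ K, p i < b i) ∧ ∀ i, K < i → p i = 0} = box b (K + 1) := by
  simp [box]

lemma box_congr {b b' : ℕ → ℕ} {n : ℕ} (h : ∀ i < n, b i = b' i) : box b n = box b' n := by
  ext p
  exact and_congr_left fun _ => forall₂_congr fun i hi => by rw [h i hi]

lemma bijOn_comp_perm_box {σ : Equiv.Perm ℕ} {n : ℕ} (hσ : ∀ i, n ≤ i → σ i = i) (b : ℕ → ℕ) :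
    Set.BijOn (fun p : ℕ → ℕ => p ∘ σ) (box b n) (box (b ∘ σ) n) := by
  have hlt : ∀ i, σ i < n ↔ i < n := by
    intro i
    by_cases hi : n ≤ i
    · simp [hσ i hi, not_lt.2 hi]
    · refine iff_of_true (not_le.1 fun h => ?_) (not_le.1 hi)
      exact hi (σ.injective (hσ _ h) ▸ h)
  refine Equiv.bijOn (σ.symm.arrowCongr (Equiv.refl ℕ)) fun p => and_congr ?_ ?_
  · refine ⟨fun h i hi => ?_, fun h i hi => h (σ i) ((hlt i).2 hi)⟩
    simpa using h (σ.symm i) ((hlt _).1 (by simpa using hi))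
  · exact forall₂_congr fun i hi => by simp [Equiv.arrowCongr_apply, hσ i hi]

lemma sum_range_comp_perm {M : Type*} [AddCommMonoid M] {σ : Equiv.Perm ℕ} {n : ℕ}
    (hσ : ∀ i, n ≤ i → σ i = i) (f : ℕ → M) :
    ∑ i ∈ range n, f (σ i) = ∑ i ∈ range n, f i :=
  σ.sum_comp _ f fun i hi => mem_range.2 (not_le.1 fun h => hi (hσ i h))

section PrefixLcm

variable (m : ℕ → ℕ)

@[simp] lemma prefixLcm_zero : prefixLcm m 0 = 1 := rfl

lemma prefixLcm_succ (n : ℕ) : prefixLcm m (n + 1) = Nat.lcm (m n) (prefixLcm m n) := by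
  rw [prefixLcm, range_add_one, lcm_insert]; rfl

variable {m}

lemma prefixLcm_pos {n : ℕ} (hm : ∀ j < n, 0 < m j) : 0 < prefixLcm m n := by
  induction n with
  | zero => simp
  | succ n ih =>
    rw [prefixLcm_succ]
    exact Nat.lcm_pos (hm n n.lt_succ_self) (ih fun j hj => hm j (hj.trans n.lt_succ_self))

lemma dvd_prefixLcm {j n : ℕ} (h : j < n) : m j ∣ prefixLcm m n :=
  Finset.dvd_lcm (mem_range.2 h)

lemma prefixLcm_dvd_succ (n : ℕ) : prefixLcm m n ∣ prefixLcm m (n + 1) := by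
  rw [prefixLcm_succ]
  exact Nat.dvd_lcm_right _ _

lemma prefixLcm_succ_eq_radix_mul (n : ℕ) : prefixLcm m (n + 1) = radix m n * prefixLcm m n :=
  (Nat.div_mul_cancel (prefixLcm_dvd_succ n)).symm

lemma prod_range_radix (n : ℕ) : ∏ j ∈ range n, radix m j = prefixLcm m n := by
  induction n with
  | zero => simp
  | succ n ih => rw [prod_range_succ, ih, prefixLcm_succ_eq_radix_mul, mul_comm]

lemma radix_coprime {n : ℕ} (hm : ∀ j < n + 1, 0 < m j) :
    Nat.Coprime (radix m n) (prefixLcm m (n + 1) / m n) := by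
  rw [radix, prefixLcm_succ, Nat.lcm_comm]
  exact Nat.coprime_lcm_div_lcm_div (prefixLcm_pos fun j hj => hm j (hj.trans n.lt_succ_self))
    (hm n n.lt_succ_self)

lemma sum_range_succ_mul_prefixLcm_div (a : ℕ → ℕ) (n : ℕ) :
    ∑ j ∈ range (n + 1), a j * (prefixLcm m (n + 1) / m j) =
      radix m n * ∑ j ∈ range n, a j * (prefixLcm m n / m j) +
        a n * (prefixLcm m (n + 1) / m n) := by
  rw [sum_range_succ, mul_sum]
  congr 1
  refine sum_congr rfl fun j hj => ?_
  rw [prefixLcm_succ_eq_radix_mul, Nat.mul_div_assoc _ (dvd_prefixLcm (mem_range.1 hj))]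
  ring

lemma eq_of_sum_modEq {n : ℕ} (hm : ∀ j < n, 0 < m j) {a b : ℕ → ℕ}
    (ha : ∀ j < n, a j < radix m j) (hb : ∀ j < n, b j < radix m j)
    (h : ∑ j ∈ range n, a j * (prefixLcm m n / m j) ≡
      ∑ j ∈ range n, b j * (prefixLcm m n / m j) [MOD prefixLcm m n]) :
    ∀ j < n, a j = b j := by
  induction n with
  | zero => simp
  | succ n ih =>
    have hm' : ∀ j < n, 0 < m j := fun j hj => hm j (hj.trans n.lt_succ_self)
    rw [sum_range_succ_mul_prefixLcm_div, sum_range_succ_mul_prefixLcm_div] at h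
    set t := radix m n
    have hlast : a n = b n := by
      have hmod := h.of_dvd (prefixLcm_succ_eq_radix_mul n ▸ dvd_mul_right t _)
      simp only [Nat.ModEq, Nat.mul_add_mod] at hmod
      exact (Nat.ModEq.cancel_right_of_coprime (radix_coprime hm) hmod).eq_of_lt_of_lt
        (ha n n.lt_succ_self) (hb n n.lt_succ_self)
    rw [hlast, prefixLcm_succ_eq_radix_mul] at h
    have ht : t ≠ 0 :=
      left_ne_zero_of_mul (prefixLcm_succ_eq_radix_mul (m := m) n ▸ (prefixLcm_pos hm).ne')
    have hrest := Nat.ModEq.mul_left_cancel' ht (Nat.ModEq.add_right_cancel' _ h)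
    intro j hj
    rcases Nat.lt_succ_iff_lt_or_eq.1 hj with hj | rfl
    · exact ih hm' (fun i hi => ha i (hi.trans n.lt_succ_self))
        (fun i hi => hb i (hi.trans n.lt_succ_self)) hrest j hj
    · exact hlast

theorem bijOn_sum_mul_prefixLcm_div_mod {n : ℕ} (hm : ∀ j < n, 0 < m j) :
    Set.BijOn (fun p : ℕ → ℕ => (∑ j ∈ range n, p j * (prefixLcm m n / m j)) % prefixLcm m n)
      (box (radix m) n) (Set.Iio (prefixLcm m n)) := by
  set f := fun p : ℕ → ℕ => (∑ j ∈ range n, p j * (prefixLcm m n / m j)) % prefixLcm m n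
  have hmaps : Set.MapsTo f (box (radix m) n) (Set.Iio (prefixLcm m n)) :=
    fun p _ => Nat.mod_lt _ (prefixLcm_pos hm)
  have hinj : Set.InjOn f (box (radix m) n) := by
    intro p hp p' hp' h
    funext i
    by_cases hi : i < n
    · exact eq_of_sum_modEq hm hp.1 hp'.1 h i hi
    · rw [hp.2 i (not_lt.1 hi), hp'.2 i (not_lt.1 hi)]
  refine ⟨hmaps, hinj, ?_⟩
  suffices f '' box (radix m) n = Set.Iio (prefixLcm m n) from this.symm.subset
  refine Set.eq_of_subset_of_ncard_le hmaps.image_subset ?_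
  rw [hinj.ncard_image, ncard_box, prod_range_radix, Set.ncard_Iio_nat]

end PrefixLcm

def moveToFront (k : ℕ) : Equiv.Perm ℕ where
  toFun j := if j = 0 then k else if j ≤ k then j - 1 else j
  invFun i := if i = k then 0 else if i < k then i + 1 else i
  left_inv j := by grind
  right_inv i := by grind

section MoveToFront

variable {k j : ℕ}

@[simp] lemma moveToFront_zero : moveToFront k 0 = k := rfl

lemma moveToFront_succ_of_lt {i : ℕ} (hi : i < k) : moveToFront k (i + 1) = i := by
  simp only [moveToFront, Equiv.coe_fn_mk]
  grind

lemma moveToFront_of_lt (hj : k < j) : moveToFront k j = j := by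
  simp only [moveToFront, Equiv.coe_fn_mk]
  grind

lemma moveToFront_lt_iff {n : ℕ} (hk : k < n) : moveToFront k j < n ↔ j < n := by
  simp only [moveToFront, Equiv.coe_fn_mk]
  grind

lemma image_moveToFront_range_of_le (hj : j ≤ k) :
    (range (j + 1)).image (moveToFront k) = insert k (range j) := by
  ext x
  simp only [mem_image, mem_range, mem_insert, moveToFront, Equiv.coe_fn_mk]
  exact ⟨fun ⟨i, hi, hx⟩ => by grind, fun hx => ⟨if x = k then 0 else x + 1, by grind, by grind⟩⟩

lemma image_moveToFront_range_of_ge (hj : k ≤ j) :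
    (range (j + 1)).image (moveToFront k) = range (j + 1) := by
  ext x
  simp only [mem_image, mem_range, moveToFront, Equiv.coe_fn_mk]
  exact ⟨fun ⟨i, hi, hx⟩ => by grind,
    fun hx => ⟨if x = k then 0 else if x < k then x + 1 else x, by grind, by grind⟩⟩

variable (f : ℕ → ℕ)

lemma prefixLcm_comp_moveToFront_of_le (hj : j ≤ k) :
    prefixLcm (f ∘ moveToFront k) (j + 1) = Nat.lcm (f k) (prefixLcm f j) := by
  rw [prefixLcm, ← lcm_image, image_moveToFront_range_of_le hj, lcm_insert]
  rfl

lemma prefixLcm_comp_moveToFront_of_ge (hj : k ≤ j) :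
    prefixLcm (f ∘ moveToFront k) (j + 1) = prefixLcm f (j + 1) := by
  rw [prefixLcm, ← lcm_image, image_moveToFront_range_of_ge hj]
  rfl

lemma radix_comp_moveToFront_zero : radix (f ∘ moveToFront k) 0 = f k := by
  simp [radix, prefixLcm_comp_moveToFront_of_le f (Nat.zero_le k)]

lemma radix_comp_moveToFront_succ_of_lt {i : ℕ} (hfk : 0 < f k) (hi : i < k) :
    radix (f ∘ moveToFront k) (i + 1) =
      (prefixLcm f (i + 1) / Nat.gcd (prefixLcm f (i + 1)) (f k)) /
        (prefixLcm f i / Nat.gcd (prefixLcm f i) (f k)) := by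
  rw [radix, prefixLcm_comp_moveToFront_of_le f hi, prefixLcm_comp_moveToFront_of_le f hi.le,
    Nat.lcm_comm, Nat.lcm_comm (f k), Nat.lcm, Nat.lcm,
    ← Nat.div_mul_right_comm (Nat.gcd_dvd_left _ _),
    ← Nat.div_mul_right_comm (Nat.gcd_dvd_left _ _), Nat.mul_div_mul_right _ _ hfk]

lemma radix_comp_moveToFront_of_lt (hj : k < j) : radix (f ∘ moveToFront k) j = radix f j := by
  obtain ⟨i, rfl⟩ : ∃ i, j = i + 1 := Nat.exists_eq_add_one.2 (Nat.zero_lt_of_lt hj)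
  rw [radix, radix, prefixLcm_comp_moveToFront_of_ge f hj.le,
    prefixLcm_comp_moveToFront_of_ge f (Nat.lt_succ_iff.1 hj)]

end MoveToFront

end MixedRadix

open MixedRadix in
theorem stmt11_general (K k : ℕ) (hk : k ≤ K) (nr : ℕ → ℕ) (hnr : ∀ i ≤ K, 0 < nr i)
    (R : ℕ) (hR : R = Finset.lcm (Finset.range (K + 1)) nr)
    (q : ℕ → ℕ) (hq : ∀ i, q i = R / nr i)
    (Mf : ℕ → ℕ) (hMf : ∀ i, Mf i = Finset.lcm (Finset.range (i + 1)) nr)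
    (d : ℕ → ℕ) (hd : ∀ i, d (i + 1) = Mf (i + 1) / Mf i)
    (s : ℕ → ℕ) (hs : ∀ i, s i = Mf i / Nat.gcd (Mf i) (nr k))
    (v : ℕ → ℕ) (hv0 : v 0 = s 0) (hv : ∀ i, v (i + 1) = s (i + 1) / s i)
    (bound : ℕ → ℕ)
    (hbound : ∀ i, bound i = if i < k then v i else if i = k then nr k else d i) :
    Set.BijOn (fun p : ℕ → ℕ => (∑ i ∈ Finset.range (K + 1), p i * q i) % R)
      {p | (∀ i ≤ K, p i < bound i) ∧ ∀ i, K < i → p i = 0}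
      (Set.Iio R) := by
  set σ := moveToFront k
  have hσ : ∀ i, K + 1 ≤ i → σ i = i := fun i hi => moveToFront_of_lt (by omega)
  have hm : ∀ j < K + 1, 0 < (nr ∘ σ) j := fun j hj =>
    hnr _ (Nat.lt_succ_iff.1 ((moveToFront_lt_iff (Nat.lt_succ_of_le hk)).2 hj))
  have hRσ : prefixLcm (nr ∘ σ) (K + 1) = R := by
    rw [prefixLcm_comp_moveToFront_of_ge nr hk, hR]; rfl
  have hMf' : ∀ i, Mf i = prefixLcm nr (i + 1) := hMf
  have hradix : ∀ j, radix (nr ∘ σ) j = (bound ∘ σ) j := by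
    rintro (_ | i)
    · simp [σ, radix_comp_moveToFront_zero, hbound]
    rcases lt_or_ge i k with hik | hki
    · rw [Function.comp_apply, moveToFront_succ_of_lt hik, hbound, if_pos hik,
        radix_comp_moveToFront_succ_of_lt nr (hnr k hk) hik]
      rcases i with _ | i
      · simp [hv0, hs, hMf']
      · rw [hv, hs, hs, hMf', hMf']
    · rw [Function.comp_apply, moveToFront_of_lt (Nat.lt_succ_of_le hki), hbound,
        if_neg (by omega), if_neg (by omega), hd, hMf', hMf',
        radix_comp_moveToFront_of_lt nr (Nat.lt_succ_of_le hki)]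
      rfl
  have hsum : ∀ p : ℕ → ℕ, ∑ i ∈ range (K + 1), p i * q i =
      ∑ j ∈ range (K + 1), (p ∘ σ) j * (R / (nr ∘ σ) j) := fun p => by
    simp only [Function.comp_apply, ← hq, sum_range_comp_perm hσ (fun i => p i * q i)]
  have hbij := bijOn_sum_mul_prefixLcm_div_mod hm
  rw [box_congr fun j _ => hradix j, hRσ] at hbij
  simp only [hsum, box_succ]
  exact hbij.comp (bijOn_comp_perm_box hσ bound)

/-- Conflict-free bank assignment: with `R = lcm(n₀,…,n_K)`, `q_i = R/n_i`,
`M_i = lcm(n₀,…,n_i)`, `d_i = M_i/M_{i−1}`, `s_{i,k} = M_i/gcd(M_i, n_k)`,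
`v_{i,k} = s_{i,k}/s_{i−1,k}` (`s_{−1,k} = 1`), the map
`h(p) = Σ p_i q_i mod R` is a bijection from `Π P_i` onto `{0,…,R−1}`, where
`P_i = {0,…,v_{i,k}−1}` for `i < k`, `P_k = {0,…,n_k−1}`, `P_i = {0,…,d_i−1}` for `i > k`. -/
theorem stmt11 (K k : ℕ) (hk : k ≤ K) (nr : ℕ → ℕ) (hnr : ∀ i ≤ K, 0 < nr i)
    (R : ℕ) (hR : R = Finset.lcm (Finset.range (K + 1)) nr)
    (q : ℕ → ℕ) (hq : ∀ i, q i = R / nr i)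
    (Mf : ℕ → ℕ) (hMf : ∀ i, Mf i = Finset.lcm (Finset.range (i + 1)) nr)
    (d : ℕ → ℕ) (hd0 : d 0 = Mf 0) (hd : ∀ i, d (i + 1) = Mf (i + 1) / Mf i)
    (s : ℕ → ℕ) (hs : ∀ i, s i = Mf i / Nat.gcd (Mf i) (nr k))
    (v : ℕ → ℕ) (hv0 : v 0 = s 0) (hv : ∀ i, v (i + 1) = s (i + 1) / s i)
    (bound : ℕ → ℕ)
    (hbound : ∀ i, bound i = if i < k then v i else if i = k then nr k else d i) :
    Set.BijOn (fun p : ℕ → ℕ => (∑ i ∈ Finset.range (K + 1), p i * q i) % R)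
      {p | (∀ i ≤ K, p i < bound i) ∧ ∀ i, K < i → p i = 0}
      (Set.Iio R) :=
  stmt11_general K k hk nr hnr R hR q hq Mf hMf d hd s hs v hv0 hv bound hbound
end

section
/- For each i with 0 ≤ i ≤ k, the function h_i(r_i, (p_j)_{j=0}^{i}) = r_i s_{i,k} + Σ_{j=0}^{i} p_j M_i/n_j, where 0 ≤ r_i < f_{i,k} and 0 ≤ p_j < v_{j,k}, takes pairwise distinct values modulo M_i, and these residues exhaust all integers from 0 to M_i − 1. -/
/-! Write `M = M_i`, `f = f_{i,k}` and `L_j = lcm(f, n_0, …, n_{j-1})`. Induction on `N` shows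
that `r · M/f + Σ_{j<N} p_j · M/n_j mod M`, for `r < f` and `p_j < L_{j+1}/L_j`, hits every
multiple of `M/L_N` below `M` exactly once. Adding the digit `p_N < L_{N+1}/L_N` with weight
`M/n_N` is injective because `gcd(M/L_N, M/n_N) = M/L_{N+1}`, and onto by counting: both sides
have `L_{N+1}` elements. Since `L_{j+1} = lcm(f, M_j) = f · s_{j,k}`, the radices `L_{j+1}/L_j`
are the `v_{j,k}`, and `L_{i+1} = M_i`, so at `N = i + 1` all residues are reached. -/

open Set

lemma Set.BijOn.of_injOn_of_ncard_le {α β : Type*} {f : α → β} {s : Set α} {t : Set β}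
    (hmaps : MapsTo f s t) (hinj : InjOn f s) (ht : t.Finite) (hcard : t.ncard ≤ s.ncard) :
    BijOn f s t :=
  ⟨hmaps, hinj,
    (eq_of_subset_of_ncard_le hmaps.image_subset (by rwa [hinj.ncard_image]) ht).symm.subset⟩

namespace Nat

lemma div_div_div_cancel_left_of_dvd {M x y : ℕ} (hM : M ≠ 0) (hxy : x ∣ y) (hyM : y ∣ M) :
    M / x / (M / y) = y / x := by
  obtain ⟨u, rfl⟩ := hxy
  obtain ⟨t, rfl⟩ := hyM
  obtain ⟨⟨hx, hu⟩, ht⟩ : (x ≠ 0 ∧ u ≠ 0) ∧ t ≠ 0 := by simpa [mul_ne_zero_iff] using hM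
  rw [Nat.mul_div_cancel_left t (pos_of_ne_zero (mul_ne_zero hx hu)), mul_assoc,
    Nat.mul_div_cancel_left _ (pos_of_ne_zero hx), Nat.mul_div_cancel u (pos_of_ne_zero ht),
    Nat.mul_div_cancel_left u (pos_of_ne_zero hx)]

lemma dvd_div_comm {M x d : ℕ} (hx : x ∣ M) (hd : d ∣ M) : d ∣ M / x ↔ x ∣ M / d := by
  rw [dvd_div_iff_mul_dvd hx, dvd_div_iff_mul_dvd hd, Nat.mul_comm]

lemma gcd_div_div_eq_div_lcm {M x y : ℕ} (hx : x ∣ M) (hy : y ∣ M) :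
    gcd (M / x) (M / y) = M / lcm x y := by
  have hl : lcm x y ∣ M := lcm_dvd hx hy
  refine dvd_antisymm ?_ (dvd_gcd (div_dvd_div_left hl (dvd_lcm_left x y))
    (div_dvd_div_left hl (dvd_lcm_right x y)))
  have hd : gcd (M / x) (M / y) ∣ M := (gcd_dvd_left _ _).trans (div_dvd_of_dvd hx)
  rw [dvd_div_comm hl hd]
  exact lcm_dvd ((dvd_div_comm hx hd).1 (gcd_dvd_left _ _))
    ((dvd_div_comm hy hd).1 (gcd_dvd_right _ _))

lemma lcm_gcd_eq_mul_div_gcd {a b c : ℕ} (hab : a ∣ b) :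
    lcm (gcd b c) a = gcd b c * (a / gcd a c) := by
  rw [lcm, gcd_comm (gcd b c), ← gcd_assoc, gcd_eq_left hab,
    Nat.mul_div_assoc _ (gcd_dvd_left a c)]

lemma bijOn_mul_Iio_div {M d : ℕ} (hM : 0 < M) (hd : d ∣ M) :
    BijOn (· * d) (Iio (M / d)) {m | m < M ∧ d ∣ m} := by
  have hd0 : 0 < d := pos_of_dvd_of_pos hd hM
  refine ⟨fun r hr => ⟨?_, dvd_mul_left d r⟩,
    fun r₁ _ r₂ _ h => Nat.eq_of_mul_eq_mul_right hd0 h,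
    fun m ⟨hm, q, hq⟩ => ⟨q, ?_, by simp [hq, Nat.mul_comm]⟩⟩
  · simpa [Nat.mul_comm] using (Nat.lt_div_iff_mul_lt' hd r).1 hr
  · rw [mem_Iio, Nat.lt_div_iff_mul_lt' hd, ← hq]; exact hm

lemma ncard_multiples_lt {M d : ℕ} (hM : 0 < M) (hd : d ∣ M) :
    {m | m < M ∧ d ∣ m}.ncard = M / d := by
  rw [← (bijOn_mul_Iio_div hM hd).ncard_eq, ncard_Iio_nat]

lemma bijOn_add_mul_mod {M a : ℕ} (g : ℕ) (hM : 0 < M) (ha : a ∣ M) :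
    BijOn (fun x : ℕ × ℕ => (x.1 + x.2 * g) % M)
      ({m | m < M ∧ a ∣ m} ×ˢ Iio (a / gcd a g)) {m | m < M ∧ gcd a g ∣ m} := by
  have hea : gcd a g ∣ a := gcd_dvd_left a g
  have heM : gcd a g ∣ M := hea.trans ha
  refine BijOn.of_injOn_of_ncard_le ?_ ?_ ((finite_Iio M).subset fun m hm => hm.1) ?_
  · rintro ⟨m, p⟩ ⟨⟨-, ham⟩, -⟩
    exact ⟨mod_lt _ hM, (dvd_mod_iff heM).2
      (dvd_add (hea.trans ham) (dvd_mul_of_dvd_right (gcd_dvd_right a g) p))⟩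
  · rintro ⟨m₁, p₁⟩ ⟨⟨hm₁, ham₁⟩, hp₁⟩ ⟨m₂, p₂⟩ ⟨⟨hm₂, ham₂⟩, hp₂⟩ h
    have hmod : m₁ + p₁ * g ≡ m₂ + p₂ * g [MOD M] := h
    have hm : m₁ ≡ m₂ [MOD a] :=
      (modEq_zero_iff_dvd.2 ham₁).trans (modEq_zero_iff_dvd.2 ham₂).symm
    have hgp : g * p₁ ≡ g * p₂ [MOD a] := by
      simpa only [Nat.mul_comm] using hm.add_left_cancel (hmod.of_dvd ha)
    obtain rfl : p₁ = p₂ :=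
      (hgp.cancel_left_div_gcd (pos_of_dvd_of_pos ha hM)).eq_of_lt_of_lt hp₁ hp₂
    exact Prod.ext ((hmod.add_right_cancel' _).eq_of_lt_of_lt hm₁ hm₂) rfl
  · rw [ncard_prod, ncard_multiples_lt hM ha, ncard_multiples_lt hM heM, ncard_Iio_nat,
      div_mul_div ha hea]

end Nat

def mixedRadixDigits (b : ℕ → ℕ) (N : ℕ) : Set (ℕ → ℕ) :=
  {p | (∀ j < N, p j < b j) ∧ ∀ j, N ≤ j → p j = 0}

lemma mixedRadixDigits_zero (b : ℕ → ℕ) : mixedRadixDigits b 0 = {0} := by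
  ext p
  simp [mixedRadixDigits, funext_iff]

lemma mixedRadixDigits_congr {b b' : ℕ → ℕ} {N : ℕ} (h : ∀ j < N, b j = b' j) :
    mixedRadixDigits b N = mixedRadixDigits b' N := by
  ext p
  simp +contextual only [mixedRadixDigits, mem_ofPred_eq, h]

lemma bijOn_prod_mixedRadixDigits_succ {α : Type*} (s : Set α) (b : ℕ → ℕ) (N : ℕ) :
    BijOn (fun x : α × (ℕ → ℕ) => ((x.1, Function.update x.2 N 0), x.2 N))
      (s ×ˢ mixedRadixDigits b (N + 1)) ((s ×ˢ mixedRadixDigits b N) ×ˢ Iio (b N)) := by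
  refine InvOn.bijOn (f' := fun y => (y.1.1, Function.update y.1.2 N y.2)) ⟨?_, ?_⟩ ?_ ?_
  · rintro ⟨a, p⟩ -
    simp
  · rintro ⟨⟨a, p⟩, q⟩ ⟨⟨-, -, hp⟩, -⟩
    have hpN : p N = 0 := hp N le_rfl
    simp [hpN]
  · rintro ⟨a, p⟩ ⟨ha, hlt, hzero⟩
    refine ⟨⟨ha, fun j hj => ?_, fun j hj => ?_⟩, hlt N N.lt_add_one⟩ <;> dsimp only
    · rw [Function.update_of_ne hj.ne]
      exact hlt j (by omega)
    · rw [Function.update_apply]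
      split_ifs
      · rfl
      · exact hzero j (by omega)
  · rintro ⟨⟨a, p⟩, q⟩ ⟨⟨ha, hlt, hzero⟩, hq⟩
    refine ⟨ha, fun j hj => ?_, fun j hj => ?_⟩ <;> dsimp only
    · rw [Function.update_apply]
      split_ifs with hjN
      · exact hjN ▸ hq
      · exact hlt j (by omega)
    · rw [Function.update_of_ne (by omega)]
      exact hzero j (by omega)

def lcmPrefix (c : ℕ) (n : ℕ → ℕ) (j : ℕ) : ℕ :=
  Nat.lcm c ((Finset.range j).lcm n)

@[simp]
lemma lcmPrefix_zero (c : ℕ) (n : ℕ → ℕ) : lcmPrefix c n 0 = c := by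
  simp [lcmPrefix]

lemma lcmPrefix_succ (c : ℕ) (n : ℕ → ℕ) (j : ℕ) :
    lcmPrefix c n (j + 1) = Nat.lcm (lcmPrefix c n j) (n j) := by
  simp only [lcmPrefix, Finset.range_add_one, Finset.lcm_insert, lcm_eq_nat_lcm]
  rw [Nat.lcm_comm (n j), Nat.lcm_assoc]

theorem bijOn_mixedRadix_sum_mod {M : ℕ} (hM : 0 < M) (c : ℕ) (n : ℕ → ℕ) (N : ℕ)
    (hN : lcmPrefix c n N ∣ M) :
    BijOn
      (fun x : ℕ × (ℕ → ℕ) => (x.1 * (M / c) + ∑ j ∈ Finset.range N, x.2 j * (M / n j)) % M)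
      (Iio c ×ˢ mixedRadixDigits (fun j => lcmPrefix c n (j + 1) / lcmPrefix c n j) N)
      {m | m < M ∧ M / lcmPrefix c n N ∣ m} := by
  induction N with
  | zero =>
    rw [lcmPrefix_zero] at hN ⊢
    have hbase := Nat.bijOn_mul_Iio_div hM (Nat.div_dvd_of_dvd hN)
    rw [Nat.div_div_self hN hM.ne'] at hbase
    rw [mixedRadixDigits_zero, prod_singleton,
      ← bijOn_comp_iff fun _ _ _ _ h => (Prod.mk.inj h).1]
    refine hbase.congr fun r hr => ?_
    simp [Nat.mod_eq_of_lt (hbase.mapsTo hr).1]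
  | succ N ih =>
    have hLL : lcmPrefix c n N ∣ lcmPrefix c n (N + 1) :=
      lcmPrefix_succ c n N ▸ Nat.dvd_lcm_left _ _
    have hnL : n N ∣ lcmPrefix c n (N + 1) := lcmPrefix_succ c n N ▸ Nat.dvd_lcm_right _ _
    have hstep := Nat.bijOn_add_mul_mod (M / n N) hM (Nat.div_dvd_of_dvd (hLL.trans hN))
    rw [Nat.gcd_div_div_eq_div_lcm (hLL.trans hN) (hnL.trans hN), ← lcmPrefix_succ,
      Nat.div_div_div_cancel_left_of_dvd hM.ne' hLL hN] at hstep
    refine ((hstep.comp ((ih (hLL.trans hN)).prodMap (bijOn_id _))).comp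
      (bijOn_prod_mixedRadixDigits_succ _ _ N)).congr ?_
    rintro ⟨r, p⟩ -
    have hsum : ∑ j ∈ Finset.range N, Function.update p N 0 j * (M / n j) =
        ∑ j ∈ Finset.range N, p j * (M / n j) :=
      Finset.sum_congr rfl fun j hj => by
        rw [Function.update_of_ne (Finset.mem_range.1 hj).ne]
    simp [hsum, Finset.sum_range_succ, add_assoc]

/-- The residues of `h_i(r_i, (p_j)) = r_i s_{i,k} + Σ_{j≤i} p_j M_i/n_j` modulo `M_i`,
for `0 ≤ r_i < f_{i,k} = gcd(M_i, n_k)` and `0 ≤ p_j < v_{j,k}`, are pairwise distinct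
and exhaust `{0,…,M_i−1}`. -/
theorem stmt12 (K k i : ℕ) (hik : i ≤ k) (hk : k ≤ K)
    (nr : ℕ → ℕ) (hnr : ∀ j ≤ K, 0 < nr j)
    (Mf : ℕ → ℕ) (hMf : ∀ j, Mf j = Finset.lcm (Finset.range (j + 1)) nr)
    (fgcd : ℕ → ℕ) (hf : ∀ j, fgcd j = Nat.gcd (Mf j) (nr k))
    (s : ℕ → ℕ) (hs : ∀ j, s j = Mf j / fgcd j)
    (v : ℕ → ℕ) (hv0 : v 0 = s 0) (hv : ∀ j, v (j + 1) = s (j + 1) / s j) :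
    Set.BijOn
      (fun x : ℕ × (ℕ → ℕ) =>
        (x.1 * s i + ∑ j ∈ Finset.range (i + 1), x.2 j * (Mf i / nr j)) % Mf i)
      {x | x.1 < fgcd i ∧ (∀ j ≤ i, x.2 j < v j) ∧ ∀ j, i < j → x.2 j = 0}
      (Set.Iio (Mf i)) := by
  have hM : 0 < Mf i := by
    rw [hMf, Nat.pos_iff_ne_zero, Finset.lcm_ne_zero_iff]
    exact fun j hj => (hnr j (by simp at hj; omega)).ne'
  have hMdvd : ∀ j ≤ i, Mf j ∣ Mf i := fun j hj => by
    rw [hMf, hMf]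
    exact Finset.lcm_mono (Finset.range_subset_range.2 (by omega))
  have hf0 : 0 < fgcd i := Nat.pos_of_dvd_of_pos (hf i ▸ Nat.gcd_dvd_left _ _) hM
  have hL : ∀ j ≤ i, lcmPrefix (fgcd i) nr (j + 1) = fgcd i * s j := fun j hj => by
    rw [lcmPrefix, ← hMf, hf, Nat.lcm_gcd_eq_mul_div_gcd (hMdvd j hj), ← hf j, hs]
  have hLi : lcmPrefix (fgcd i) nr (i + 1) = Mf i := by
    rw [hL i le_rfl, hs, Nat.mul_div_cancel' (hf i ▸ Nat.gcd_dvd_left _ _)]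
  have hradix : ∀ j ≤ i, lcmPrefix (fgcd i) nr (j + 1) / lcmPrefix (fgcd i) nr j = v j := by
    rintro (_ | j) hj
    · rw [hL 0 hj, lcmPrefix_zero, Nat.mul_div_cancel_left _ hf0, hv0]
    · rw [hL (j + 1) hj, hL j (by omega), Nat.mul_div_mul_left _ _ hf0, hv]
  have key := bijOn_mixedRadix_sum_mod hM (fgcd i) nr (i + 1) (hLi ▸ dvd_rfl)
  rw [← hs, hLi, Nat.div_self hM, mixedRadixDigits_congr fun j hj => hradix j (by omega)] at key
  convert key using 1
  · ext ⟨r, p⟩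
    simp [mixedRadixDigits]
  · ext m
    simp
end
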